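/- For a single M/M/M cache with independent exponential inter-request time X (rate λ > 0), TTL T (rate λ_T > 0) and object fetch delay Δ (rate λ_Δ > 0), the object hit probability P_h := E[N] / (1 + E[m(Δ)] + E[N]), where E[N] := P(X < T)/(1 − P(X < T)) and E[m(Δ)] := λ·E[Δ], equals τ̄_T / (1 + τ̄_T + τ̄_Δ) = λ·λ_Δ / (λ_T·λ_Δ + λ·λ_Δ + λ·λ_T), where τ̄_T := λ/λ_T and τ̄_Δ := λ/λ_Δ. -/

import Mathlib

/-!
Conditioning on `X = x`, the event `X < T` has probability `exp (-λ_T x)`, and this factor turns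
the `Exp(λ)` density into `λ / (λ + λ_T)` times the `Exp(λ + λ_T)` density; hence
`P(X < T) = λ / (λ + λ_T)` and `E[N] = λ / λ_T`. By the tail formula
`E[Δ] = ∫₀^∞ exp (-λ_Δ t) dt = 1 / λ_Δ`, so `E[m(Δ)] = λ / λ_Δ`, and the rest is algebra.
-/

open MeasureTheory ProbabilityTheory Real Set

namespace ProbabilityTheory

lemma measurable_exponentialPDF (r : ℝ) : Measurable (exponentialPDF r) :=
  (measurable_exponentialPDFReal r).ennreal_ofReal

lemma expMeasure_eq_withDensity (r : ℝ) :
    expMeasure r = volume.withDensity (exponentialPDF r) := rfl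

lemma ae_nonneg_expMeasure (r : ℝ) : ∀ᵐ x ∂expMeasure r, 0 ≤ x := by
  have h : expMeasure r (Iio 0) = 0 := by
    rw [expMeasure_eq_withDensity, withDensity_apply _ measurableSet_Iio]
    exact lintegral_exponentialPDF_of_nonpos le_rfl
  simp only [ae_iff, not_le]
  exact h

lemma expMeasure_Ioi {r x : ℝ} (hr : 0 < r) (hx : 0 ≤ x) :
    expMeasure r (Ioi x) = ENNReal.ofReal (rexp (-(r * x))) := by
  have := isProbabilityMeasure_expMeasure hr
  have hcdf := cdf_expMeasure_eq hr x
  rw [if_pos hx, cdf_eq_real] at hcdf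
  rw [← compl_Iic, ← ofReal_measureReal, measureReal_compl measurableSet_Iic, hcdf]
  simp

lemma integral_id_expMeasure {r : ℝ} (hr : 0 < r) : ∫ x, x ∂expMeasure r = r⁻¹ := by
  have hnn := ae_nonneg_expMeasure r
  have hint : IntegrableOn (fun t => rexp (-(r * t))) (Ioi 0) := by
    simpa only [neg_mul] using exp_neg_integrableOn_Ioi 0 hr
  have hexp : ∫ t in Ioi 0, rexp (-(r * t)) = r⁻¹ := by
    simpa [neg_mul, div_neg, neg_div] using integral_exp_mul_Ioi (neg_lt_zero.mpr hr) 0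
  have htail : ∫⁻ t in Ioi 0, expMeasure r {x | t < x} = ENNReal.ofReal r⁻¹ := by
    rw [← hexp, ofReal_integral_eq_lintegral_ofReal hint
      (Filter.Eventually.of_forall fun t => (exp_pos _).le)]
    exact setLIntegral_congr_fun measurableSet_Ioi fun t ht => expMeasure_Ioi hr ht.le
  rw [integral_eq_lintegral_of_nonneg_ae hnn aestronglyMeasurable_id,
    lintegral_eq_lintegral_meas_lt _ hnn aemeasurable_id, htail,
    ENNReal.toReal_ofReal (by positivity)]

lemma exponentialPDF_mul_exp_neg {a b : ℝ} (hab : 0 < a + b) (x : ℝ) :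
    exponentialPDF a x * ENNReal.ofReal (rexp (-(b * x)))
      = ENNReal.ofReal (a / (a + b)) * exponentialPDF (a + b) x := by
  rcases lt_or_ge x 0 with hx | hx
  · simp [exponentialPDF_of_neg hx]
  rw [exponentialPDF_of_nonneg hx, exponentialPDF_of_nonneg hx,
    ← ENNReal.ofReal_mul' (exp_pos _).le, ← ENNReal.ofReal_mul' (by positivity),
    mul_assoc, ← exp_add, ← mul_assoc, div_mul_cancel₀ a hab.ne']
  ring_nf

lemma lintegral_exp_neg_mul_expMeasure {a b : ℝ} (hab : 0 < a + b) :
    ∫⁻ x, ENNReal.ofReal (rexp (-(b * x))) ∂expMeasure a = ENNReal.ofReal (a / (a + b)) := by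
  rw [expMeasure_eq_withDensity, lintegral_withDensity_eq_lintegral_mul₀
      (measurable_exponentialPDF a).aemeasurable (by fun_prop)]
  simp_rw [Pi.mul_apply, exponentialPDF_mul_exp_neg hab]
  rw [lintegral_const_mul _ (measurable_exponentialPDF _), lintegral_exponentialPDF_eq_one hab,
    mul_one]

lemma expMeasure_prod_expMeasure_lt {a b : ℝ} (ha : 0 < a) (hb : 0 < b) :
    (expMeasure a).prod (expMeasure b) {p : ℝ × ℝ | p.1 < p.2} = ENNReal.ofReal (a / (a + b)) := by
  have := isProbabilityMeasure_expMeasure hb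
  rw [Measure.prod_apply (measurableSet_lt measurable_fst measurable_snd),
    ← lintegral_exp_neg_mul_expMeasure (add_pos ha hb)]
  refine lintegral_congr_ae ?_
  filter_upwards [ae_nonneg_expMeasure a] with x hx
  exact expMeasure_Ioi hb hx

lemma IndepFun.measure_lt_of_map_eq_expMeasure {Ω : Type*} [MeasurableSpace Ω] {μ : Measure Ω}
    [IsFiniteMeasure μ] {X Y : Ω → ℝ} (hXY : IndepFun X Y μ) {a b : ℝ} (ha : 0 < a) (hb : 0 < b)
    (hXm : AEMeasurable X μ) (hYm : AEMeasurable Y μ)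
    (hX : μ.map X = expMeasure a) (hY : μ.map Y = expMeasure b) :
    μ {ω | X ω < Y ω} = ENNReal.ofReal (a / (a + b)) := by
  rw [← expMeasure_prod_expMeasure_lt ha hb, ← hX, ← hY,
    ← hXY.map_prod_eq_prod_map_map hXm hYm,
    Measure.map_apply_of_aemeasurable (hXm.prodMk hYm)
      (measurableSet_lt measurable_fst measurable_snd)]
  rfl

lemma integral_eq_inv_of_map_eq_expMeasure {Ω : Type*} [MeasurableSpace Ω] {μ : Measure Ω}
    {X : Ω → ℝ} {r : ℝ} (hr : 0 < r) (hXm : AEMeasurable X μ) (hX : μ.map X = expMeasure r) :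
    ∫ ω, X ω ∂μ = r⁻¹ := by
  rw [← integral_id_expMeasure hr, ← hX]
  exact (integral_map hXm aestronglyMeasurable_id).symm

end ProbabilityTheory

/-- For a single M/M/M TTL cache (exponential inter-request time `X` with rate `lam`,
exponential TTL `T` with rate `lamT`, exponential object fetch delay `Δ` with rate `lamD`,
all independent), the object hit probability
`P_h = E[N]/(1 + E[m(Δ)] + E[N])`, with `E[N] = P(X < T)/(1 - P(X < T))` and
`E[m(Δ)] = lam * E[Δ]`, equals
`τ̄_T / (1 + τ̄_T + τ̄_Δ) = lam*lamD / (lamT*lamD + lam*lamD + lam*lamT)`. -/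
theorem hit_probability_single_MMM_cache
    {Ω : Type*} [MeasurableSpace Ω] (μ : Measure Ω) [IsProbabilityMeasure μ]
    (X T Δ : Ω → ℝ) (lam lamT lamD : ℝ)
    (hlam : 0 < lam) (hlamT : 0 < lamT) (hlamD : 0 < lamD)
    (hmX : Measurable X) (hmT : Measurable T) (hmΔ : Measurable Δ)
    (hX : μ.map X = expMeasure lam)
    (hT : μ.map T = expMeasure lamT)
    (hΔ : μ.map Δ = expMeasure lamD)
    (hindep : iIndepFun ![X, T, Δ] μ)
    (p EN Em Ph : ℝ)
    (hp : p = (μ {ω | X ω < T ω}).toReal)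
    (hEN : EN = p / (1 - p))
    (hEm : Em = lam * ∫ ω, Δ ω ∂μ)
    (hPh : Ph = EN / (1 + Em + EN)) :
    Ph = (lam / lamT) / (1 + lam / lamT + lam / lamD) ∧
      Ph = lam * lamD / (lamT * lamD + lam * lamD + lam * lamT) := by
  have hXT : IndepFun X T μ := by simpa using hindep.indepFun (show (0 : Fin 3) ≠ 1 by decide)
  have hp' : p = lam / (lam + lamT) := by
    rw [hp, hXT.measure_lt_of_map_eq_expMeasure hlam hlamT hmX.aemeasurable hmT.aemeasurable hX hT,
      ENNReal.toReal_ofReal (by positivity)]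
  have hEN' : EN = lam / lamT := by
    have hsum : lam + lamT ≠ 0 := by positivity
    rw [hEN, hp', one_sub_div hsum, add_sub_cancel_left, div_div_div_cancel_right₀ hsum]
  have hEm' : Em = lam / lamD := by
    rw [hEm, integral_eq_inv_of_map_eq_expMeasure hlamD hmΔ.aemeasurable hΔ, div_eq_mul_inv]
  subst hPh hEN' hEm'
  constructor <;> field_simp <;> ring
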